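/- arXiv:1608.05838 — 4 statements merged into one kernel-verified Lean document; each statement's English description precedes it below -/
import Mathlib

section
/- If the directed graph 𝒢_g (with vertex set B^N and an edge labeled m ∈ ⟦0, 2^N−1⟧ from x to x̌ iff g(m, x) = x̌) is strongly connected, then the map G_g is strongly transitive on (X, d): for all points (x,m), (x̌,m̌) ∈ X and all ε > 0, there exist n ∈ ℕ and a point (x', m') with d((x,m),(x',m')) < ε and G_g^n(x', m') = (x̌, m̌). -/
/-! Keep the first `K` symbols of `m`, so that the perturbed point lies within `10⁻ᴷ` of `(x, m)`:
position `k` contributes at most `N · 10⁻⁽ᵏ⁺¹⁾` to the sum in `dM`, so the tail beyond `K` is at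
most `N · 10⁻ᴷ / 9`, which the factor `9 / N` scales to `10⁻ᴷ`. Then insert the labels of a path
in `𝒢_g` from the vertex reached after those `K` steps to `x̌`, and continue with `m̌`: after
`K + |path|` shifts the orbit is at `(x̌, m̌)`. -/

def hamB {N : ℕ} (x y : Fin N → Bool) : ℕ :=
  (Finset.univ.filter fun i => x i ≠ y i).card

noncomputable def dE {N : ℕ} (x y : Fin N → Bool) : ℝ := hamB x y

noncomputable def dM {N : ℕ} (m m' : ℕ → Fin N → Bool) : ℝ :=
  (9 / (N : ℝ)) * ∑' k : ℕ, (hamB (m k) (m' k) : ℝ) / 10 ^ (k + 1)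

noncomputable def dX {N : ℕ} (p q : (Fin N → Bool) × (ℕ → Fin N → Bool)) : ℝ :=
  dE p.1 q.1 + dM p.2 q.2

def Gmap {N : ℕ} (g : (Fin N → Bool) → (Fin N → Bool) → (Fin N → Bool))
    (p : (Fin N → Bool) × (ℕ → Fin N → Bool)) : (Fin N → Bool) × (ℕ → Fin N → Bool) :=
  (g (p.2 0) p.1, fun k => p.2 (k + 1))


/-- End vertex of the path starting at `x` and following the edge labels in `L`
in the graph `𝒢_g` (an edge labeled `m` goes from `v` to `g m v`). -/
def pathEnd {N : ℕ} (g : (Fin N → Bool) → (Fin N → Bool) → (Fin N → Bool))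
    (x : Fin N → Bool) (L : List (Fin N → Bool)) : Fin N → Bool :=
  L.foldl (fun v m => g m v) x

lemma hamB_self {N : ℕ} (x : Fin N → Bool) : hamB x x = 0 := by
  simp [hamB]

lemma hamB_le {N : ℕ} (x y : Fin N → Bool) : hamB x y ≤ N :=
  (Finset.card_filter_le _ _).trans_eq (Finset.card_fin N)

lemma pathEnd_append {N : ℕ} (g : (Fin N → Bool) → (Fin N → Bool) → (Fin N → Bool))
    (x : Fin N → Bool) (L₁ L₂ : List (Fin N → Bool)) :
    pathEnd g x (L₁ ++ L₂) = pathEnd g (pathEnd g x L₁) L₂ :=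
  List.foldl_append

lemma Gmap_iterate {N : ℕ} (g : (Fin N → Bool) → (Fin N → Bool) → (Fin N → Bool)) (n : ℕ)
    (x : Fin N → Bool) (m : ℕ → Fin N → Bool) :
    (Gmap g)^[n] (x, m) = (pathEnd g x (Stream'.take n m), Stream'.drop n m) := by
  induction n generalizing x m with
  | zero => rfl
  | succ n ih => exact ih _ _

lemma Gmap_iterate_append_stream {N : ℕ}
    (g : (Fin N → Bool) → (Fin N → Bool) → (Fin N → Bool)) (x : Fin N → Bool)
    (L : List (Fin N → Bool)) (s : ℕ → Fin N → Bool) :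
    (Gmap g)^[L.length] (x, L ++ₛ s) = (pathEnd g x L, s) :=
  (Gmap_iterate g L.length x (L ++ₛ s)).trans <| Prod.ext
    (congrArg (pathEnd g x) ((Stream'.take_append_of_le_length _ L s le_rfl).trans L.take_length))
    (Stream'.drop_append_stream L s)

lemma dM_le_of_forall_lt_eq {N K : ℕ} {m m' : ℕ → Fin N → Bool}
    (h : ∀ k < K, m k = m' k) : dM m m' ≤ (1 / 10) ^ K := by
  set f : ℕ → ℝ := fun k => (hamB (m k) (m' k) : ℝ) / 10 ^ (k + 1)
  set c : ℝ := N * (1 / 10) ^ (K + 1)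
  have hf_tail : ∀ k, f (k + K) ≤ c * (1 / 10) ^ k := fun k => by
    rw [mul_assoc, ← pow_add, one_div_pow, ← div_eq_mul_one_div, add_right_comm, add_comm K]
    simp only [f]
    gcongr
    exact_mod_cast hamB_le _ _
  have hgeo : Summable fun k => c * (1 / 10 : ℝ) ^ k :=
    (summable_geometric_of_lt_one (by norm_num) (by norm_num)).mul_left c
  have hf_tail_summable : Summable fun k => f (k + K) :=
    hgeo.of_nonneg_of_le (fun _ => by positivity) hf_tail
  have hf_eq_tail : ∑' k, f k = ∑' k, f (k + K) := by
    rw [← ((summable_nat_add_iff K).1 hf_tail_summable).sum_add_tsum_nat_add K,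
      Finset.sum_eq_zero fun k hk => by simp [f, h k (Finset.mem_range.1 hk), hamB_self],
      zero_add]
  calc dM m m' = 9 / N * ∑' k, f (k + K) := by rw [dM, ← hf_eq_tail]
    _ ≤ 9 / N * ∑' k, c * (1 / 10) ^ k :=
      mul_le_mul_of_nonneg_left (hf_tail_summable.tsum_le_tsum hf_tail hgeo) (by positivity)
    _ = 9 / N * c * (10 / 9) := by
      rw [tsum_mul_left, tsum_geometric_of_lt_one (by norm_num) (by norm_num)]
      norm_num [mul_assoc]
    _ ≤ (1 / 10) ^ K := by
      rcases eq_or_ne N 0 with rfl | hN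
      · simp
      · simp only [c]
        field_simp
        exact le_of_eq (by ring)

lemma dX_le_of_forall_lt_eq {N K : ℕ} (x : Fin N → Bool) {m m' : ℕ → Fin N → Bool}
    (h : ∀ k < K, m k = m' k) : dX (x, m) (x, m') ≤ (1 / 10) ^ K := by
  simpa [dX, dE, hamB_self] using dM_le_of_forall_lt_eq h

lemma get_take_append_stream {α : Type*} {K k : ℕ} (s t : Stream' α) (hk : k < K) :
    (s.take K ++ₛ t).get k = s.get k :=
  have hk' : k < (s.take K).length := by rw [Stream'.length_take]; exact hk
  (Stream'.get_append_left k _ t hk').trans (Stream'.take_get k K s hk')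

theorem strongly_transitive_of_strongly_connected_general (N : ℕ)
    (g : (Fin N → Bool) → (Fin N → Bool) → (Fin N → Bool))
    (hsc : ∀ x y : Fin N → Bool, ∃ L : List (Fin N → Bool), pathEnd g x L = y) :
    ∀ p q : (Fin N → Bool) × (ℕ → Fin N → Bool), ∀ ε > (0 : ℝ),
      ∃ n : ℕ, ∃ p', dX p p' < ε ∧ (Gmap g)^[n] p' = q := by
  rintro ⟨x, m⟩ ⟨y, s⟩ ε hε
  obtain ⟨K, hK⟩ := exists_pow_lt_of_lt_one hε (by norm_num : (1 / 10 : ℝ) < 1)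
  obtain ⟨L, hL⟩ := hsc (pathEnd g x (Stream'.take K m)) y
  refine ⟨(Stream'.take K m ++ L).length, (x, Stream'.take K m ++ L ++ₛ s), ?_, ?_⟩
  · refine (dX_le_of_forall_lt_eq x fun k hk => ?_).trans_lt hK
    have hsplit := Stream'.append_append_stream (Stream'.take K m) L s
    exact (congrArg (Stream'.get · k) hsplit ▸ get_take_append_stream m (L ++ₛ s) hk).symm
  · rw [Gmap_iterate_append_stream, pathEnd_append, hL]

/-- if `𝒢_g` is strongly connected then `G_g` is strongly transitive on `(X,d)`. -/
theorem strongly_transitive_of_strongly_connected (N : ℕ) (hN : 1 ≤ N)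
    (g : (Fin N → Bool) → (Fin N → Bool) → (Fin N → Bool))
    (hsc : ∀ x y : Fin N → Bool, ∃ L : List (Fin N → Bool), pathEnd g x L = y) :
    ∀ p q : (Fin N → Bool) × (ℕ → Fin N → Bool), ∀ ε > (0 : ℝ),
      ∃ n : ℕ, ∃ p', dX p p' < ε ∧ (Gmap g)^[n] p' = q :=
  strongly_transitive_of_strongly_connected_general N g hsc
end

section
/- On a metric space with infinitely many points, if a continuous map f is topologically transitive and has dense periodic points, then f has sensitive dependence on initial conditions (Banks' theorem). -/
open Function Metric

private lemma banks_iter_mod {X : Type*} (f : X → X) {n : ℕ} {p : X} (hn : f^[n] p = p)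
    (i : ℕ) : f^[i] p = f^[i % n] p := by
  conv_lhs => rw [← Nat.mod_add_div i n]
  rw [Function.iterate_add_apply, Function.iterate_mul, Function.iterate_fixed hn]

/-- Banks' theorem: on an infinite metric space, a continuous,
topologically transitive map with dense periodic points has sensitive dependence
on initial conditions. -/
theorem banks_sensitivity {X : Type*} [MetricSpace X] [Infinite X] (f : X → X)
    (hf : Continuous f)
    (htrans : ∀ U V : Set X, IsOpen U → IsOpen V → U.Nonempty → V.Nonempty →
      ∃ k > 0, (f^[k] '' U ∩ V).Nonempty)
    (hper : Dense {x : X | ∃ n ≥ 1, f^[n] x = x}) :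
    ∃ δ > (0 : ℝ), ∀ x : X, ∀ ε > (0 : ℝ),
      ∃ y, dist x y < ε ∧ ∃ n : ℕ, δ < dist (f^[n] x) (f^[n] y) := by
  classical
  -- a periodic point exists
  obtain ⟨p, np, hnp1, hp⟩ := hper.nonempty
  have hnppos : 0 < np := hnp1
  -- a second periodic point whose orbit is disjoint from that of p
  have hq : ∃ q, (∃ m ≥ 1, f^[m] q = q) ∧ ∀ i j : ℕ, f^[i] q ≠ f^[j] p := by
    by_contra h
    push_neg at h
    have hsub : {x : X | ∃ n ≥ 1, f^[n] x = x} ⊆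
        ↑((Finset.range np).image fun i => f^[i] p) := by
      rintro q ⟨m, hm1, hmq⟩
      obtain ⟨i, j, hij⟩ := h q ⟨m, hm1, hmq⟩
      have hile : i ≤ m * i := Nat.le_mul_of_pos_left i hm1
      have hq' : q = f^[m * i - i + j] p := by
        rw [Function.iterate_add_apply, ← hij, ← Function.iterate_add_apply,
          Nat.sub_add_cancel hile, Function.iterate_mul, Function.iterate_fixed hmq]
      rw [hq', banks_iter_mod f hp]
      simp only [Finset.coe_image, Set.mem_image, Finset.coe_range, Set.mem_Iio]
      exact ⟨_, Nat.mod_lt _ hnppos, rfl⟩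
    have hdense : Dense (↑((Finset.range np).image fun i => f^[i] p) : Set X) :=
      hper.mono hsub
    have hclosed : IsClosed (↑((Finset.range np).image fun i => f^[i] p) : Set X) :=
      (Finset.finite_toSet _).isClosed
    have huniv : (Set.univ : Set X) = ↑((Finset.range np).image fun i => f^[i] p) := by
      rw [← hclosed.closure_eq, hdense.closure_eq]
    exact Set.infinite_univ (huniv ▸ (Finset.finite_toSet _))
  obtain ⟨q, ⟨nq, hnq1, hq⟩, hdisj⟩ := hq
  have hnqpos : 0 < nq := hnq1
  -- minimum distance between the two orbits
  set A : Finset X := (Finset.range np).image fun i => f^[i] p with hA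
  set B : Finset X := (Finset.range nq).image fun i => f^[i] q with hB
  set D : Finset ℝ := (A ×ˢ B).image fun z => dist z.1 z.2 with hD
  have hAne : A.Nonempty := ⟨p, by
    simp only [hA, Finset.mem_image]
    exact ⟨0, Finset.mem_range.2 hnppos, rfl⟩⟩
  have hBne : B.Nonempty := ⟨q, by
    simp only [hB, Finset.mem_image]
    exact ⟨0, Finset.mem_range.2 hnqpos, rfl⟩⟩
  have hDne : D.Nonempty := (hAne.product hBne).image _
  set d₀ : ℝ := D.min' hDne with hd₀
  have hd₀pos : 0 < d₀ := by
    obtain ⟨z, hz, hzd⟩ := Finset.mem_image.1 (D.min'_mem hDne)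
    obtain ⟨hz1, hz2⟩ := Finset.mem_product.1 hz
    obtain ⟨i, _, hi⟩ := Finset.mem_image.1 hz1
    obtain ⟨j, _, hj⟩ := Finset.mem_image.1 hz2
    rw [hd₀, ← hzd]
    exact dist_pos.2 (by rw [← hi, ← hj]; exact fun e => hdisj j i e.symm)
  set δ : ℝ := d₀ / 8 with hδ
  have hδpos : 0 < δ := by positivity
  have hmemA : ∀ i, f^[i] p ∈ A := fun i => by
    rw [banks_iter_mod f hp]
    exact Finset.mem_image.2 ⟨_, Finset.mem_range.2 (Nat.mod_lt _ hnppos), rfl⟩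
  have hmemB : ∀ i, f^[i] q ∈ B := fun i => by
    rw [banks_iter_mod f hq]
    exact Finset.mem_image.2 ⟨_, Finset.mem_range.2 (Nat.mod_lt _ hnqpos), rfl⟩
  have hd₀le : ∀ a ∈ A, ∀ b ∈ B, d₀ ≤ dist a b := fun a ha b hb =>
    Finset.min'_le D _ (Finset.mem_image.2 ⟨(a, b), Finset.mem_product.2 ⟨ha, hb⟩, rfl⟩)
  -- every point is 4δ-far from one of the two orbits
  have h4 : ∀ x : X, (∀ i, 4 * δ ≤ dist x (f^[i] p)) ∨ (∀ i, 4 * δ ≤ dist x (f^[i] q)) := by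
    intro x
    by_contra h
    push_neg at h
    obtain ⟨⟨i, hi⟩, ⟨j, hj⟩⟩ := h
    have := hd₀le _ (hmemA i) _ (hmemB j)
    have htri := dist_triangle_left (f^[i] p) (f^[j] q) x
    rw [hδ] at hi hj
    linarith
  refine ⟨δ, hδpos, fun x ε hε => ?_⟩
  set ε' : ℝ := min ε δ with hε'
  have hε'pos : 0 < ε' := lt_min hε hδpos
  -- a periodic point within ε' of x
  obtain ⟨pt, ⟨n, hn1, hpt⟩, hptx⟩ := hper.exists_dist_lt x hε'pos
  have hnpos : 0 < n := hn1
  -- an orbit that is 4δ-far from x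
  obtain ⟨c, nc, hnc1, hc, h4c⟩ :
      ∃ c nc, 1 ≤ nc ∧ f^[nc] c = c ∧ ∀ i, 4 * δ ≤ dist x (f^[i] c) := by
    rcases h4 x with h | h
    · exact ⟨p, np, hnp1, hp, h⟩
    · exact ⟨q, nq, hnq1, hq, h⟩
  set V : Set X := ⋂ i ∈ Finset.range (n + 1), f^[i] ⁻¹' ball (f^[i] c) δ with hV
  have hVopen : IsOpen V :=
    isOpen_biInter_finset fun i _ => (isOpen_ball).preimage (hf.iterate i)
  have hVne : V.Nonempty := ⟨c, by
    simp only [hV, Set.mem_iInter, Set.mem_preimage, mem_ball]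
    exact fun i _ => by simpa using hδpos⟩
  obtain ⟨k, hkpos, w, ⟨z, hzU, rfl⟩, hwV⟩ :=
    htrans (ball x ε') V isOpen_ball hVopen ⟨x, mem_ball_self hε'pos⟩ hVne
  -- choose j a multiple of n with k < j ≤ k + n
  set j : ℕ := n * (k / n + 1) with hj
  have hkey : k + (j - k) = j ∧ 1 ≤ j - k ∧ j - k ≤ n := by
    have h1 : n * (k / n) + k % n = k := Nat.div_add_mod k n
    have h2 : k % n < n := Nat.mod_lt _ hnpos
    have h3 : j = n * (k / n) + n := by rw [hj, Nat.mul_succ]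
    omega
  set r : ℕ := j - k with hr
  obtain ⟨hjkr, hr1, hrn⟩ := hkey
  have hjpt : f^[j] pt = pt := by
    rw [hj, Function.iterate_mul, Function.iterate_fixed hpt]
  have hjz : f^[j] z = f^[r] (f^[k] z) := by
    rw [← hjkr, Nat.add_comm, Function.iterate_add_apply]
  have hfz : dist (f^[r] (f^[k] z)) (f^[r] c) < δ := by
    have := Set.mem_iInter₂.1 hwV r (Finset.mem_range.2 (by omega))
    simpa [mem_ball] using this
  have h4r : 4 * δ ≤ dist x (f^[r] c) := h4c r
  have hzx : dist x z < ε' := by rw [dist_comm]; exact mem_ball.1 hzU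
  have hε'δ : ε' ≤ δ := min_le_right _ _
  -- dist pt (f^[j] z) > 2δ
  have hbig : 2 * δ < dist pt (f^[r] (f^[k] z)) := by
    have t1 := dist_triangle x pt (f^[r] c)
    have t2 := dist_triangle pt (f^[r] (f^[k] z)) (f^[r] c)
    have := dist_comm (f^[r] (f^[k] z)) (f^[r] c)
    linarith [dist_nonneg (x := pt) (y := f^[r] (f^[k] z)), hptx]
  by_cases hcase : δ < dist (f^[j] x) (f^[j] pt)
  · exact ⟨pt, lt_of_lt_of_le hptx (min_le_left _ _), j, hcase⟩
  · push_neg at hcase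
    refine ⟨z, lt_of_lt_of_le hzx (min_le_left _ _), j, ?_⟩
    have t3 := dist_triangle pt (f^[j] x) (f^[j] z)
    rw [hjz] at t3
    rw [hjpt, dist_comm] at hcase
    rw [hjz]
    linarith
end

section
/- When the embedded block cipher is the identity, the CBC mode of operation G_g with g(m, x) = F_{f_0}(x, m) is chaotic according to Devaney on (X, d). -/
def Fneg {N : ℕ} (x m : Fin N → Bool) : Fin N → Bool :=
  fun j => if m j then x j else !(x j)


def IsOpenX {N : ℕ} (U : Set ((Fin N → Bool) × (ℕ → Fin N → Bool))) : Prop :=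
  ∀ p ∈ U, ∃ ε > (0 : ℝ), {q | dX p q < ε} ⊆ U

-- accumulated flip parity
def Qb {N : ℕ} (m : ℕ → Fin N → Bool) : ℕ → Fin N → Bool
  | 0 => fun _ => false
  | n+1 => fun j => xor (Qb m n j) (!(m n j))

lemma Qb_congr {N : ℕ} {m m' : ℕ → Fin N → Bool} {n : ℕ}
    (h : ∀ k < n, m k = m' k) : Qb m n = Qb m' n := by
  induction n with
  | zero => rfl
  | succ n ih =>
      funext j
      simp only [Qb, ih (fun k hk => h k (Nat.lt_succ_of_lt hk)),
        h n (Nat.lt_succ_self n)]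

lemma Qb_add {N : ℕ} (m : ℕ → Fin N → Bool) (a n : ℕ) (j : Fin N) :
    Qb m (a + n) j = xor (Qb m a j) (Qb (fun k => m (a + k)) n j) := by
  induction n with
  | zero => simp [Qb]
  | succ n ih => simp [Qb, ← Nat.add_assoc, ih, Bool.xor_assoc]

lemma iter_formula {N : ℕ} (n : ℕ) (x : Fin N → Bool) (m : ℕ → Fin N → Bool) :
    (Gmap (fun m x => Fneg x m))^[n] (x, m)
      = (fun j => xor (x j) (Qb m n j), fun k => m (n + k)) := by
  induction n with
  | zero => simp [Qb]
  | succ n ih =>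
      rw [Function.iterate_succ_apply', ih]
      unfold Gmap Fneg
      refine Prod.ext ?_ ?_
      · funext j
        simp only [Qb, Nat.add_zero]
        cases m n j <;> cases x j <;> cases Qb m n j <;> rfl
      · funext k
        show m (n + (k + 1)) = m (n + 1 + k)
        have h : n + (k + 1) = n + 1 + k := by omega
        rw [h]

lemma hamB_pos {N : ℕ} {x y : Fin N → Bool} (h : x ≠ y) : 1 ≤ hamB x y := by
  classical
  obtain ⟨j, hj⟩ := Function.ne_iff.mp h
  have : j ∈ Finset.univ.filter fun i => x i ≠ y i := by simp [hj]
  exact Finset.card_pos.mpr ⟨j, this⟩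

lemma dE_self {N : ℕ} (x : Fin N → Bool) : dE x x = 0 := by simp [dE, hamB_self]

lemma dE_ge_one {N : ℕ} {x y : Fin N → Bool} (h : x ≠ y) : (1 : ℝ) ≤ dE x y := by
  have := hamB_pos h
  unfold dE
  exact_mod_cast this

lemma summable_geom_aux (c : ℝ) : Summable (fun k : ℕ => c * (1 / 10) ^ (k + 1)) := by
  have : Summable (fun k : ℕ => (1 / 10 : ℝ) ^ k) :=
    summable_geometric_of_lt_one (by norm_num) (by norm_num)
  simpa [pow_succ, mul_comm, mul_assoc, mul_left_comm] using (this.mul_left (c * (1/10)))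

lemma dM_term_le {N : ℕ} (m m' : ℕ → Fin N → Bool) (k : ℕ) :
    (hamB (m k) (m' k) : ℝ) / 10 ^ (k + 1) ≤ (N : ℝ) * (1 / 10) ^ (k + 1) := by
  have h1 : (hamB (m k) (m' k) : ℝ) ≤ (N : ℝ) := by exact_mod_cast hamB_le _ _
  have h2 : (0 : ℝ) < 10 ^ (k + 1) := by positivity
  rw [div_le_iff₀ h2]
  calc (hamB (m k) (m' k) : ℝ) ≤ N := h1
  _ = (N : ℝ) * (1 / 10) ^ (k + 1) * 10 ^ (k + 1) := by
      rw [mul_assoc, one_div, inv_pow, inv_mul_cancel₀ (by positivity), mul_one]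

lemma dM_term_nonneg {N : ℕ} (m m' : ℕ → Fin N → Bool) (k : ℕ) :
    (0 : ℝ) ≤ (hamB (m k) (m' k) : ℝ) / 10 ^ (k + 1) := by positivity

lemma dM_summable {N : ℕ} (m m' : ℕ → Fin N → Bool) :
    Summable (fun k : ℕ => (hamB (m k) (m' k) : ℝ) / 10 ^ (k + 1)) :=
  Summable.of_nonneg_of_le (dM_term_nonneg m m') (dM_term_le m m') (summable_geom_aux N)

lemma dM_self {N : ℕ} (m : ℕ → Fin N → Bool) : dM m m = 0 := by
  simp [dM, hamB_self]

lemma dM_nonneg {N : ℕ} (m m' : ℕ → Fin N → Bool) : 0 ≤ dM m m' := by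
  unfold dM
  apply mul_nonneg (by positivity)
  exact tsum_nonneg (dM_term_nonneg m m')

lemma dM_le {N : ℕ} (hN : 1 ≤ N) (K : ℕ) (m m' : ℕ → Fin N → Bool)
    (h : ∀ k < K, m k = m' k) : dM m m' ≤ (1 / 10) ^ K := by
  classical
  set f : ℕ → ℝ := fun k => (hamB (m k) (m' k) : ℝ) / 10 ^ (k + 1) with hf
  set g : ℕ → ℝ := fun k => if k < K then 0 else (N : ℝ) * (1 / 10) ^ (k + 1) with hg
  have hgsum : Summable g := by
    apply Summable.of_nonneg_of_le (fun k => ?_) (fun k => ?_) (summable_geom_aux N)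
    · by_cases hk : k < K <;> simp [hg, hk] <;> positivity
    · by_cases hk : k < K <;> simp [hg, hk] <;> positivity
  have hfg : ∀ k, f k ≤ g k := by
    intro k
    by_cases hk : k < K
    · simp [hf, hg, hk, h k hk, hamB_self]
    · simpa [hg, hk] using dM_term_le m m' k
  have h1 : ∑' k, f k ≤ ∑' k, g k :=
    Summable.tsum_le_tsum hfg (dM_summable m m') hgsum
  have h2 : ∑' k, g k = (N : ℝ) * (1 / 10) ^ K / 9 := by
    have hsplit := (Summable.sum_add_tsum_nat_add K hgsum)
    have hz : ∑ i ∈ Finset.range K, g i = 0 := by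
      apply Finset.sum_eq_zero
      intro i hi
      simp [hg, Finset.mem_range.mp hi]
    have htail : ∑' i : ℕ, g (i + K) = (N : ℝ) * (1 / 10) ^ K / 9 := by
      have : ∀ i : ℕ, g (i + K) = ((N : ℝ) * (1 / 10) ^ (K + 1)) * (1 / 10) ^ i := by
        intro i
        have : ¬ (i + K < K) := by omega
        simp only [hg, this, if_false]
        ring
      rw [tsum_congr this, tsum_mul_left,
        tsum_geometric_of_lt_one (by norm_num) (by norm_num : (1/10:ℝ) < 1)]
      ring
    rw [← hsplit, hz, zero_add, htail]
  have hN0 : (0 : ℝ) < N := by exact_mod_cast Nat.lt_of_lt_of_le Nat.zero_lt_one hN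
  unfold dM
  rw [← hf]
  calc (9 / (N : ℝ)) * ∑' k, f k ≤ (9 / (N : ℝ)) * ((N : ℝ) * (1 / 10) ^ K / 9) := by
        apply mul_le_mul_of_nonneg_left (h1.trans_eq h2) (by positivity)
  _ = (1 / 10) ^ K := by field_simp

lemma dX_eq {N : ℕ} (p q : (Fin N → Bool) × (ℕ → Fin N → Bool)) :
    dX p q = dE p.1 q.1 + dM p.2 q.2 := rfl

/-- with the identity block cipher, i.e. `g(m,x) = F_{f_0}(x,m)`,
the CBC mode `G_g` is Devaney chaotic on `(X, d)`. -/
theorem cbc_identity_devaney_chaotic (N : ℕ) (hN : 1 ≤ N) :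
    let g : (Fin N → Bool) → (Fin N → Bool) → (Fin N → Bool) := fun m x => Fneg x m
    (∀ U V : Set ((Fin N → Bool) × (ℕ → Fin N → Bool)),
       IsOpenX U → IsOpenX V → U.Nonempty → V.Nonempty →
       ∃ k > 0, ((Gmap g)^[k] '' U ∩ V).Nonempty) ∧
    (∀ p : (Fin N → Bool) × (ℕ → Fin N → Bool), ∀ ε > (0 : ℝ),
       ∃ q, dX p q < ε ∧ ∃ n ≥ 1, (Gmap g)^[n] q = q) ∧
    (∃ δ > (0 : ℝ), ∀ p : (Fin N → Bool) × (ℕ → Fin N → Bool), ∀ ε > (0 : ℝ),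
       ∃ q, dX p q < ε ∧ ∃ n : ℕ, δ < dX ((Gmap g)^[n] p) ((Gmap g)^[n] q)) := by
  intro g
  have hg : g = fun m x => Fneg x m := rfl
  refine ⟨?_, ?_, ?_⟩
  · -- transitivity
    intro U V hU _hV hUne hVne
    obtain ⟨p, hp⟩ := hUne
    obtain ⟨q, hq⟩ := hVne
    obtain ⟨εU, hεU, hball⟩ := hU p hp
    obtain ⟨K, hK⟩ := exists_pow_lt_of_lt_one hεU (show (1/10:ℝ) < 1 by norm_num)
    classical
    set mK : Fin N → Bool := fun j => !(xor (xor (p.1 j) (Qb p.2 K j)) (q.1 j)) with hmK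
    set r2 : ℕ → Fin N → Bool :=
      fun k => if k < K then p.2 k else if k = K then mK else q.2 (k - (K+1)) with hr2
    have hrU : (p.1, r2) ∈ U := by
      apply hball
      have hagree : ∀ k < K, p.2 k = r2 k := by
        intro k hk; simp [hr2, hk]
      have : dX p (p.1, r2) = dM p.2 r2 := by
        rw [dX_eq, dE_self, zero_add]
      rw [Set.mem_setOf_eq, this]
      exact lt_of_le_of_lt (dM_le hN K _ _ hagree) hK
    refine ⟨K+1, Nat.succ_pos K, q, ⟨(p.1, r2), hrU, ?_⟩, hq⟩
    rw [hg, iter_formula]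
    have hQ : Qb r2 K = Qb p.2 K := by
      apply Qb_congr
      intro k hk; simp [hr2, hk]
    refine Prod.ext ?_ ?_
    · funext j
      show xor (p.1 j) (Qb r2 (K+1) j) = q.1 j
      have h1 : Qb r2 (K+1) j = xor (Qb p.2 K j) (!(mK j)) := by
        simp only [Qb, hQ]
        congr 1
        simp [hr2]
      rw [h1, hmK]
      beta_reduce
      cases p.1 j <;> cases Qb p.2 K j <;> cases q.1 j <;> rfl
    · funext k
      show r2 (K + 1 + k) = q.2 k
      have h1 : ¬ (K + 1 + k < K) := by omega
      have h2 : ¬ (K + 1 + k = K) := by omega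
      have h3 : K + 1 + k - (K + 1) = k := by omega
      simp [hr2, h1, h2, h3]
  · -- dense periodic points
    intro p ε hε
    obtain ⟨K0, hK0⟩ := exists_pow_lt_of_lt_one hε (show (1/10:ℝ) < 1 by norm_num)
    set K := K0 + 1 with hKdef
    set q2 : ℕ → Fin N → Bool := fun k => p.2 (k % K) with hq2
    have hmod : ∀ k : ℕ, q2 (K + k) = q2 k := by
      intro k
      have : K + k = k + 1 * K := by ring
      simp only [hq2, this, Nat.add_mul_mod_self_right]
    refine ⟨(p.1, q2), ?_, 2*K, by omega, ?_⟩
    · have hagree : ∀ k < K, p.2 k = q2 k := by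
        intro k hk; simp [hq2, Nat.mod_eq_of_lt hk]
      have hlt : (1/10 : ℝ)^K < ε := by
        refine lt_of_le_of_lt ?_ hK0
        apply pow_le_pow_of_le_one (by norm_num) (by norm_num)
        omega
      have : dX p (p.1, q2) = dM p.2 q2 := by rw [dX_eq, dE_self, zero_add]
      rw [this]
      exact lt_of_le_of_lt (dM_le hN K _ _ hagree) hlt
    · rw [hg, iter_formula]
      refine Prod.ext ?_ ?_
      · funext j
        show xor (p.1 j) (Qb q2 (2*K) j) = p.1 j
        have hshift : (fun k => q2 (K + k)) = q2 := funext hmod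
        have : Qb q2 (2*K) j = false := by
          rw [two_mul, Qb_add, hshift, Bool.xor_self]
        rw [this, Bool.xor_false]
      · funext k
        show q2 (2*K + k) = q2 k
        have : 2*K + k = k + 2 * K := by ring
        simp only [hq2, this, Nat.add_mul_mod_self_right]
  · -- sensitivity
    refine ⟨1/2, by norm_num, ?_⟩
    intro p ε hε
    obtain ⟨K, hK⟩ := exists_pow_lt_of_lt_one hε (show (1/10:ℝ) < 1 by norm_num)
    classical
    set j0 : Fin N := ⟨0, hN⟩ with hj0
    set q2 : ℕ → Fin N → Bool :=
      fun k => if k = K then (fun j => if j = j0 then !(p.2 K j0) else p.2 K j) else p.2 k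
      with hq2
    refine ⟨(p.1, q2), ?_, K+1, ?_⟩
    · have hagree : ∀ k < K, p.2 k = q2 k := by
        intro k hk
        have : k ≠ K := by omega
        simp [hq2, this]
      have : dX p (p.1, q2) = dM p.2 q2 := by rw [dX_eq, dE_self, zero_add]
      rw [this]
      exact lt_of_le_of_lt (dM_le hN K _ _ hagree) hK
    · rw [hg, iter_formula, iter_formula]
      have htail : (fun k => q2 (K + 1 + k)) = (fun k => p.2 (K + 1 + k)) := by
        funext k
        have : K + 1 + k ≠ K := by omega
        simp [hq2, this]
      have hQ : Qb q2 K = Qb p.2 K := by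
        apply Qb_congr
        intro k hk
        have : k ≠ K := by omega
        simp [hq2, this]
      have hne : (fun j => xor (p.1 j) (Qb p.2 (K+1) j))
          ≠ (fun j => xor (p.1 j) (Qb q2 (K+1) j)) := by
        intro hcontra
        have h1 := congrFun hcontra j0
        simp only [Qb, hQ] at h1
        have h2 : q2 K j0 = !(p.2 K j0) := by simp [hq2]
        rw [h2] at h1
        cases p.1 j0 <;> cases Qb p.2 K j0 <;> cases p.2 K j0 <;> simp_all
      rw [dX_eq]
      simp only
      rw [htail, dM_self, add_zero]
      have := dE_ge_one hne
      linarith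
end

section
/- Suppose N is even. Then the directed graph 𝒢_{f_0 ∘ F_{f_0}} (with edges labeled by indices m ∈ {1,...,N}, where following edge m from x leads to the vector obtained by flipping all bits of x except the m-th) is strongly connected. -/
/-!
Edge `m` flips every bit except the `m`-th. Following all `N` edges once flips every bit
`N - 1` times, which for even `N` negates the vector; one more step along edge `m` undoes the
negation everywhere except at bit `m`. So every single-bit flip is realised by a path, and any
two vectors are joined by flipping the bits where they differ one at a time.
-/

/-- `h_m` flips every bit except the `m`-th one. -/
def hflip {N : ℕ} (m : Fin N) (x : Fin N → Bool) : Fin N → Bool :=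
  fun j => if j = m then x j else !(x j)

open Function

theorem rel_of_forall_rel_update {ι : Type*} [Fintype ι] [DecidableEq ι] {α : ι → Type*}
    {R : (∀ i, α i) → (∀ i, α i) → Prop} (hrefl : ∀ x, R x x)
    (htrans : ∀ x y z, R x y → R y z → R x z) (hupdate : ∀ x i a, R x (update x i a))
    (x y : ∀ i, α i) : R x y := by
  suffices h : ∀ s : Finset ι, R x (s.piecewise y x) by simpa using h Finset.univ
  intro s
  induction s using Finset.induction_on with
  | empty => simpa using hrefl x
  | insert i s _ ih =>
    rw [Finset.piecewise_insert]
    exact htrans _ _ _ ih (hupdate _ i _)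

theorem List.countP_ne_finRange {n : ℕ} (j : Fin n) :
    (List.finRange n).countP (· ≠ j) = n - 1 := by
  have hsplit := List.length_eq_countP_add_countP (· == j) (l := List.finRange n)
  rw [← List.count_eq_countP, List.count_finRange, List.length_finRange] at hsplit
  simp only [beq_iff_eq, ne_eq] at hsplit ⊢
  omega

section

variable {N : ℕ}

theorem foldl_hflip_apply (L : List (Fin N)) (x : Fin N → Bool) (j : Fin N) :
    L.foldl (fun v m => hflip m v) x j = if Even (L.countP (· ≠ j)) then x j else !x j := by
  induction L generalizing x with
  | nil => simp
  | cons m L ih =>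
    rw [List.foldl_cons, ih, List.countP_cons]
    by_cases hjm : j = m
    · simp [hflip, hjm]
    · simp [hflip, hjm, Ne.symm hjm, Nat.even_add_one, apply_ite]

theorem foldl_hflip_finRange (hN : Even N) (x : Fin N → Bool) :
    (List.finRange N).foldl (fun v m => hflip m v) x = fun j => !x j := by
  funext j
  have hodd : ¬Even (N - 1) := by
    rw [Nat.even_sub (Nat.one_le_of_lt j.pos)]; simp [hN]
  rw [foldl_hflip_apply, List.countP_ne_finRange, if_neg hodd]

theorem hflip_not (m : Fin N) (x : Fin N → Bool) :
    hflip m (fun j => !x j) = update x m (!x m) := by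
  funext j
  by_cases hjm : j = m <;> simp [hflip, hjm]

end

/-- if `N` is even, the graph `𝒢_{f_0 ∘ F_{f_0}}` (edge `m` from `x`
flips all bits except the `m`-th) is strongly connected. -/
theorem graph_neg_strongly_connected (N : ℕ) (hN : Even N) (x y : Fin N → Bool) :
    ∃ L : List (Fin N), L.foldl (fun v m => hflip m v) x = y := by
  refine rel_of_forall_rel_update
    (R := fun x y => ∃ L : List (Fin N), L.foldl (fun v m => hflip m v) x = y)
    (fun x => ⟨[], rfl⟩) ?_ ?_ x y
  · rintro x y z ⟨L₁, rfl⟩ ⟨L₂, rfl⟩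
    exact ⟨L₁ ++ L₂, List.foldl_append⟩
  · intro x m b
    rcases Bool.eq_or_eq_not b (x m) with rfl | rfl
    · exact ⟨[], (update_eq_self m x).symm⟩
    · refine ⟨List.finRange N ++ [m], ?_⟩
      rw [List.foldl_append, foldl_hflip_finRange hN, List.foldl_cons, List.foldl_nil, hflip_not]
end
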